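/- arXiv:2505.19787 — 3 statements merged into one kernel-verified Lean document; each statement's English description precedes it below -/
import Mathlib

section
/- Let d ≥ 1 and k ∈ [1,∞). The metric space (P_{k*}, ‖·‖_{k*}) is complete: every sequence (μ_n) in P_{k*} that is Cauchy with respect to the k*-distance converges in k*-distance to some μ ∈ P_{k*}. -/
open MeasureTheory Filter
open scoped ENNReal
open scoped Topology

/-- The localized `~L^k` norm of a function on `ℝ^d`. -/
noncomputable def tildeLnorm (d : ℕ) (k : ℝ) (f : EuclideanSpace ℝ (Fin d) → ℝ) : ℝ≥0∞ :=
  ⨆ x : EuclideanSpace ℝ (Fin d),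
    (∫⁻ y in Metric.closedBall x 1, ENNReal.ofReal (|f y| ^ k)) ^ (1 / k)

/-- `‖μ‖_{k*} = sup { μ(|f|) : ‖f‖_{~L^k} ≤ 1 }`. -/
noncomputable def kstarNorm (d : ℕ) (k : ℝ) (μ : Measure (EuclideanSpace ℝ (Fin d))) : ℝ≥0∞ :=
  ⨆ (f : EuclideanSpace ℝ (Fin d) → ℝ) (_ : Measurable f ∧ tildeLnorm d k f ≤ 1),
    ∫⁻ y, ENNReal.ofReal |f y| ∂μ

/-- `‖μ - ν‖_{k*} = sup { |μ(f) - ν(f)| : ‖f‖_{~L^k} ≤ 1 }`. -/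
noncomputable def kstarDist (d : ℕ) (k : ℝ) (μ ν : Measure (EuclideanSpace ℝ (Fin d))) : ℝ≥0∞ :=
  ⨆ (f : EuclideanSpace ℝ (Fin d) → ℝ) (_ : Measurable f ∧ tildeLnorm d k f ≤ 1),
    ENNReal.ofReal |(∫ y, f y ∂μ) - (∫ y, f y ∂ν)|

namespace Stmt6Aux

variable {d : ℕ} {k : ℝ}

noncomputable def bC (d : ℕ) : ℝ :=
  max 1 (volume (Metric.closedBall (0 : EuclideanSpace ℝ (Fin d)) 1)).toReal

lemma one_le_bC : 1 ≤ bC d := le_max_left _ _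

lemma bC_pos : (0:ℝ) < bC d := lt_of_lt_of_le one_pos one_le_bC

lemma vol_ball_le (x : EuclideanSpace ℝ (Fin d)) :
    volume (Metric.closedBall x 1) ≤ ENNReal.ofReal (bC d) := by
  rw [Measure.addHaar_closedBall_center]
  exact le_trans (le_of_eq (ENNReal.ofReal_toReal measure_closedBall_lt_top.ne).symm)
    (ENNReal.ofReal_le_ofReal (le_max_right _ _))

noncomputable def c0 (d : ℕ) (k : ℝ) : ℝ := ((bC d)⁻¹) ^ (1 / k)

lemma c0_pos : 0 < c0 d k :=
  Real.rpow_pos_of_pos (inv_pos.mpr bC_pos) _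

lemma c0_rpow (hk : 1 ≤ k) : (c0 d k) ^ k = (bC d)⁻¹ := by
  rw [c0, ← Real.rpow_mul (inv_nonneg.mpr bC_pos.le),
    one_div_mul_cancel (by linarith : k ≠ 0), Real.rpow_one]

lemma tildeLnorm_mono (hk : 1 ≤ k) {f g : EuclideanSpace ℝ (Fin d) → ℝ}
    (h : ∀ y, |g y| ≤ |f y|) : tildeLnorm d k g ≤ tildeLnorm d k f := by
  refine iSup_mono fun x => ?_
  refine ENNReal.rpow_le_rpow ?_ (by positivity)
  refine lintegral_mono fun y => ENNReal.ofReal_le_ofReal ?_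
  exact Real.rpow_le_rpow (abs_nonneg _) (h y) (le_trans zero_le_one hk)

lemma tildeLnorm_abs (f : EuclideanSpace ℝ (Fin d) → ℝ) :
    tildeLnorm d k (fun y => |f y|) = tildeLnorm d k f := by
  simp [tildeLnorm, abs_abs]

lemma tildeLnorm_le_one (hk : 1 ≤ k) {f : EuclideanSpace ℝ (Fin d) → ℝ}
    (h : ∀ y, |f y| ≤ c0 d k) : tildeLnorm d k f ≤ 1 := by
  refine iSup_le fun x => ?_
  have h1 : (∫⁻ y in Metric.closedBall x 1, ENNReal.ofReal (|f y| ^ k)) ≤ 1 := by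
    calc ∫⁻ y in Metric.closedBall x 1, ENNReal.ofReal (|f y| ^ k)
        ≤ ∫⁻ _ in Metric.closedBall x 1, ENNReal.ofReal ((bC d)⁻¹) := by
          refine lintegral_mono fun y => ENNReal.ofReal_le_ofReal ?_
          rw [← c0_rpow hk]
          exact Real.rpow_le_rpow (abs_nonneg _) (h y) (le_trans zero_le_one hk)
      _ = ENNReal.ofReal ((bC d)⁻¹) * volume (Metric.closedBall x 1) := setLIntegral_const _ _
      _ ≤ ENNReal.ofReal ((bC d)⁻¹) * ENNReal.ofReal (bC d) :=
          mul_le_mul_right (vol_ball_le x) _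
      _ = ENNReal.ofReal ((bC d)⁻¹ * bC d) :=
          (ENNReal.ofReal_mul (inv_nonneg.mpr bC_pos.le)).symm
      _ ≤ 1 := by rw [inv_mul_cancel₀ bC_pos.ne']; simp
  exact ENNReal.rpow_le_one h1 (by positivity)

lemma lintegral_le_kstarNorm {μ : Measure (EuclideanSpace ℝ (Fin d))}
    {f : EuclideanSpace ℝ (Fin d) → ℝ} (hf : Measurable f) (h1 : tildeLnorm d k f ≤ 1) :
    ∫⁻ y, ENNReal.ofReal |f y| ∂μ ≤ kstarNorm d k μ :=
  le_iSup₂ (f := fun f (_ : Measurable f ∧ tildeLnorm d k f ≤ 1) =>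
    ∫⁻ y, ENNReal.ofReal |f y| ∂μ) f ⟨hf, h1⟩

lemma abs_le_kstarDist {μ ν : Measure (EuclideanSpace ℝ (Fin d))}
    {f : EuclideanSpace ℝ (Fin d) → ℝ} (hf : Measurable f) (h1 : tildeLnorm d k f ≤ 1) :
    ENNReal.ofReal |(∫ y, f y ∂μ) - (∫ y, f y ∂ν)| ≤ kstarDist d k μ ν :=
  le_iSup₂ (f := fun f (_ : Measurable f ∧ tildeLnorm d k f ≤ 1) =>
    ENNReal.ofReal |(∫ y, f y ∂μ) - (∫ y, f y ∂ν)|) f ⟨hf, h1⟩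

lemma integrable_of_admissible {μ : Measure (EuclideanSpace ℝ (Fin d))}
    (hμ : kstarNorm d k μ < ∞) {f : EuclideanSpace ℝ (Fin d) → ℝ}
    (hf : Measurable f) (h1 : tildeLnorm d k f ≤ 1) : Integrable f μ := by
  refine ⟨hf.aestronglyMeasurable, ?_⟩
  have heq : ∫⁻ y, (‖f y‖₊ : ℝ≥0∞) ∂μ = ∫⁻ y, ENNReal.ofReal |f y| ∂μ := by
    congr 1; ext y
    rw [← Real.norm_eq_abs, ofReal_norm]; rfl
  rw [HasFiniteIntegral]; refine lt_of_eq_of_lt heq ?_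
  exact lt_of_le_of_lt (lintegral_le_kstarNorm hf h1) hμ

lemma ofReal_integral_abs {μ : Measure (EuclideanSpace ℝ (Fin d))}
    (hμ : kstarNorm d k μ < ∞) {f : EuclideanSpace ℝ (Fin d) → ℝ}
    (hf : Measurable f) (h1 : tildeLnorm d k f ≤ 1) :
    ENNReal.ofReal (∫ y, |f y| ∂μ) = ∫⁻ y, ENNReal.ofReal |f y| ∂μ :=
  ofReal_integral_eq_lintegral_ofReal (integrable_of_admissible hμ hf h1).abs
    (Filter.Eventually.of_forall fun y => abs_nonneg _)

lemma ac_of_kstarNorm_lt_top (hk : 1 ≤ k) {μ : Measure (EuclideanSpace ℝ (Fin d))}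
    [IsProbabilityMeasure μ] (hμ : kstarNorm d k μ < ∞) : μ ≪ volume := by
  refine Measure.AbsolutelyContinuous.mk fun A hA hA0 => ?_
  by_contra hne
  -- every multiple of the indicator of A is admissible
  have key : ∀ c : ℝ, 0 ≤ c → ENNReal.ofReal c * μ A ≤ kstarNorm d k μ := by
    intro c hc
    have hfm : Measurable (A.indicator (fun _ => c)) := measurable_const.indicator hA
    have h1 : tildeLnorm d k (A.indicator (fun _ => c)) ≤ 1 := by
      have hz : tildeLnorm d k (A.indicator (fun _ => c)) = 0 := by
        refine ENNReal.iSup_eq_zero.mpr fun x => ?_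
        rw [ENNReal.rpow_eq_zero_iff]
        left
        refine ⟨?_, by positivity⟩
        have h0 : (fun y => ENNReal.ofReal (|A.indicator (fun _ => c) y| ^ k)) =ᵐ[volume]
            (fun _ => 0) := by
          filter_upwards [measure_eq_zero_iff_ae_notMem.mp hA0] with y hy
          rw [Set.indicator_of_notMem hy, abs_zero,
            Real.zero_rpow (by linarith : k ≠ 0), ENNReal.ofReal_zero]
        calc ∫⁻ y in Metric.closedBall x 1, ENNReal.ofReal (|A.indicator (fun _ => c) y| ^ k)
            = ∫⁻ _ in Metric.closedBall x 1, (0:ℝ≥0∞) :=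
              lintegral_congr_ae (ae_restrict_of_ae h0)
          _ = 0 := lintegral_zero
      rw [hz]; exact zero_le_one
    have heq : ∫⁻ y, ENNReal.ofReal |A.indicator (fun _ => c) y| ∂μ
        = ENNReal.ofReal c * μ A := by
      have hind : (fun y => ENNReal.ofReal |A.indicator (fun _ => c) y|)
          = A.indicator (fun _ => ENNReal.ofReal c) := by
        funext y
        by_cases hy : y ∈ A
        · simp [Set.indicator_of_mem hy, abs_of_nonneg hc]
        · simp [Set.indicator_of_notMem hy]
      rw [hind, lintegral_indicator_const hA]
    calc ENNReal.ofReal c * μ A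
        = ∫⁻ y, ENNReal.ofReal |A.indicator (fun _ => c) y| ∂μ := heq.symm
      _ ≤ kstarNorm d k μ := lintegral_le_kstarNorm hfm h1
  -- contradiction
  have ht : 0 < (μ A).toReal :=
    ENNReal.toReal_pos hne (measure_ne_top μ A)
  set c : ℝ := ((kstarNorm d k μ).toReal + 1) / (μ A).toReal with hcdef
  have hc0 : 0 ≤ c := by positivity
  have hlt : kstarNorm d k μ < ENNReal.ofReal c * μ A := by
    have hμA : μ A = ENNReal.ofReal (μ A).toReal :=
      (ENNReal.ofReal_toReal (measure_ne_top μ A)).symm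
    rw [hμA, ← ENNReal.ofReal_mul hc0, hcdef, div_mul_cancel₀ _ ht.ne']
    refine (ENNReal.lt_ofReal_iff_toReal_lt hμ.ne).mpr ?_
    linarith
  exact absurd (key c hc0) (not_le.mpr hlt)

lemma kstarDist_lt_top {μ ν : Measure (EuclideanSpace ℝ (Fin d))}
    (hμ : kstarNorm d k μ < ∞) (hν : kstarNorm d k ν < ∞) :
    kstarDist d k μ ν < ∞ := by
  have hle : kstarDist d k μ ν ≤ kstarNorm d k μ + kstarNorm d k ν := by
    refine iSup₂_le fun f hf => ?_
    calc ENNReal.ofReal |(∫ y, f y ∂μ) - (∫ y, f y ∂ν)|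
        ≤ ENNReal.ofReal (|∫ y, f y ∂μ| + |∫ y, f y ∂ν|) :=
          ENNReal.ofReal_le_ofReal (abs_sub _ _)
      _ ≤ ENNReal.ofReal |∫ y, f y ∂μ| + ENNReal.ofReal |∫ y, f y ∂ν| :=
          ENNReal.ofReal_add_le
      _ ≤ ENNReal.ofReal (∫ y, |f y| ∂μ) + ENNReal.ofReal (∫ y, |f y| ∂ν) := by
          gcongr <;>
            exact (norm_integral_le_integral_norm f).trans (le_of_eq (by simp [Real.norm_eq_abs]))
      _ ≤ kstarNorm d k μ + kstarNorm d k ν := by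
          rw [ofReal_integral_abs hμ hf.1 hf.2, ofReal_integral_abs hν hf.1 hf.2]
          exact add_le_add (lintegral_le_kstarNorm hf.1 hf.2) (lintegral_le_kstarNorm hf.1 hf.2)
  exact lt_of_le_of_lt hle (ENNReal.add_lt_top.mpr ⟨hμ, hν⟩)

lemma lintegral_abs_le_of_dist {μ ν : Measure (EuclideanSpace ℝ (Fin d))}
    (hμ : kstarNorm d k μ < ∞) (hν : kstarNorm d k ν < ∞)
    {f : EuclideanSpace ℝ (Fin d) → ℝ} (hf : Measurable f) (h1 : tildeLnorm d k f ≤ 1) :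
    ∫⁻ y, ENNReal.ofReal |f y| ∂μ ≤ kstarNorm d k ν + kstarDist d k μ ν := by
  have habs1 : tildeLnorm d k (fun y => |f y|) ≤ 1 := by rw [tildeLnorm_abs]; exact h1
  have habsm : Measurable (fun y => |f y|) := hf.abs
  rw [← ofReal_integral_abs hμ hf h1]
  calc ENNReal.ofReal (∫ y, |f y| ∂μ)
      ≤ ENNReal.ofReal ((∫ y, |f y| ∂ν) + |(∫ y, |f y| ∂μ) - (∫ y, |f y| ∂ν)|) :=
        ENNReal.ofReal_le_ofReal (by
          have h2 := le_abs_self ((∫ y, |f y| ∂μ) - (∫ y, |f y| ∂ν))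
          linarith)
    _ ≤ ENNReal.ofReal (∫ y, |f y| ∂ν) + ENNReal.ofReal |(∫ y, |f y| ∂μ) - (∫ y, |f y| ∂ν)| :=
        ENNReal.ofReal_add_le
    _ ≤ kstarNorm d k ν + kstarDist d k μ ν := by
        refine add_le_add ?_ ?_
        · rw [ofReal_integral_abs hν hf h1]
          exact lintegral_le_kstarNorm hf h1
        · have h3 := abs_le_kstarDist (μ := μ) (ν := ν) habsm habs1
          simpa [abs_abs] using h3

lemma dist_toL1_eq {α : Type*} [MeasurableSpace α] {ρ : Measure α} {u v : α → ℝ}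
    (hu : Integrable u ρ) (hv : Integrable v ρ) :
    dist (hu.toL1 u) (hv.toL1 v) = ∫ x, |u x - v x| ∂ρ := by
  rw [dist_edist, Integrable.edist_toL1_toL1]
  have habs : ∀ x, edist (u x) (v x) = ENNReal.ofReal |u x - v x| := by
    intro x; rw [edist_dist, Real.dist_eq]
  simp_rw [habs]
  have heq : ∫⁻ a, ENNReal.ofReal |u a - v a| ∂ρ
      = ENNReal.ofReal (∫ x, |u x - v x| ∂ρ) := by
    have hint2 : Integrable (fun x => |u x - v x|) ρ := (hu.sub hv).abs
    rw [ofReal_integral_eq_lintegral_ofReal hint2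
      (Eventually.of_forall fun x => abs_nonneg _)]
  rw [heq, ENNReal.toReal_ofReal (integral_nonneg fun x => abs_nonneg _)]

lemma L1dist_le (hk : 1 ≤ k) {μm μn : Measure (EuclideanSpace ℝ (Fin d))}
    [IsFiniteMeasure μm] [IsFiniteMeasure μn]
    (hacm : μm ≪ volume) (hacn : μn ≪ volume) (hD : kstarDist d k μm μn ≠ ∞) :
    ∫ x, |(μm.rnDeriv volume x).toReal - (μn.rnDeriv volume x).toReal| ∂volume
      ≤ (c0 d k)⁻¹ * (kstarDist d k μm μn).toReal := by
  set hm : EuclideanSpace ℝ (Fin d) → ℝ := fun x => (μm.rnDeriv volume x).toReal with hhm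
  set hn : EuclideanSpace ℝ (Fin d) → ℝ := fun x => (μn.rnDeriv volume x).toReal with hhn
  have hmm : Measurable hm := (Measure.measurable_rnDeriv _ _).ennreal_toReal
  have hnm : Measurable hn := (Measure.measurable_rnDeriv _ _).ennreal_toReal
  have hmint : Integrable hm volume := Measure.integrable_toReal_rnDeriv
  have hnint : Integrable hn volume := Measure.integrable_toReal_rnDeriv
  set S : Set (EuclideanSpace ℝ (Fin d)) := {x | hn x ≤ hm x} with hSdef
  have hS : MeasurableSet S := measurableSet_le hnm hmm
  set c := c0 d k with hc
  set f : EuclideanSpace ℝ (Fin d) → ℝ :=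
    fun x => S.indicator (fun _ => c) x + Sᶜ.indicator (fun _ => -c) x with hfdef
  have hfm : Measurable f :=
    (measurable_const.indicator hS).add (measurable_const.indicator hS.compl)
  have hpos : 0 < c := c0_pos
  have hfb : ∀ y, |f y| ≤ c := by
    intro y
    by_cases hy : y ∈ S
    · rw [hfdef]
      simp only [Set.indicator_of_mem hy,
        Set.indicator_of_notMem (Set.notMem_compl_iff.mpr hy)]
      rw [add_zero, abs_of_nonneg hpos.le]
    · rw [hfdef]
      simp only [Set.indicator_of_notMem hy, Set.indicator_of_mem (Set.mem_compl hy)]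
      rw [zero_add, abs_neg, abs_of_nonneg hpos.le]
  have hfL : tildeLnorm d k f ≤ 1 := tildeLnorm_le_one hk hfb
  have hint : ∀ (ρ : Measure (EuclideanSpace ℝ (Fin d))) [IsFiniteMeasure ρ],
      ∫ y, f y ∂ρ = c * (ρ S).toReal - c * (ρ Sᶜ).toReal := by
    intro ρ hρ
    rw [hfdef, integral_add ((integrable_const c).indicator hS)
      ((integrable_const (-c)).indicator hS.compl),
      integral_indicator_const _ hS, integral_indicator_const _ hS.compl]
    simp [mul_comm]
    rfl
  have hsetm : ∀ (T : Set (EuclideanSpace ℝ (Fin d))), ∫ x in T, hm x ∂volume = (μm T).toReal :=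
    fun T => Measure.setIntegral_toReal_rnDeriv hacm T
  have hsetn : ∀ (T : Set (EuclideanSpace ℝ (Fin d))), ∫ x in T, hn x ∂volume = (μn T).toReal :=
    fun T => Measure.setIntegral_toReal_rnDeriv hacn T
  have habs : Integrable (fun x => |hm x - hn x|) volume := (hmint.sub hnint).abs
  have hsplit : ∫ x, |hm x - hn x| ∂volume
      = ((μm S).toReal - (μn S).toReal) + ((μn Sᶜ).toReal - (μm Sᶜ).toReal) := by
    rw [← integral_add_compl hS habs]
    have h1 : ∫ x in S, |hm x - hn x| ∂volume = (μm S).toReal - (μn S).toReal := by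
      rw [setIntegral_congr_fun hS (g := fun x => hm x - hn x)
        (fun x hx => abs_of_nonneg (sub_nonneg.mpr hx)),
        integral_sub (hmint.integrableOn) (hnint.integrableOn), hsetm, hsetn]
    have h2 : ∫ x in Sᶜ, |hm x - hn x| ∂volume = (μn Sᶜ).toReal - (μm Sᶜ).toReal := by
      rw [setIntegral_congr_fun hS.compl (g := fun x => hn x - hm x)
        (fun x hx => by
          rw [abs_sub_comm]
          exact abs_of_nonneg (sub_nonneg.mpr (le_of_lt (not_le.mp hx)))),
        integral_sub (hnint.integrableOn) (hmint.integrableOn), hsetm, hsetn]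
    rw [h1, h2]
  have hdiff : (∫ y, f y ∂μm) - (∫ y, f y ∂μn)
      = c * (∫ x, |hm x - hn x| ∂volume) := by
    rw [hint μm, hint μn, hsplit]; ring
  have hb := abs_le_kstarDist (μ := μm) (ν := μn) hfm hfL
  have hb' : |(∫ y, f y ∂μm) - (∫ y, f y ∂μn)| ≤ (kstarDist d k μm μn).toReal :=
    (ENNReal.ofReal_le_iff_le_toReal hD).mp hb
  have habs' : c * (∫ x, |hm x - hn x| ∂volume) ≤ (kstarDist d k μm μn).toReal := by
    calc c * (∫ x, |hm x - hn x| ∂volume) = (∫ y, f y ∂μm) - (∫ y, f y ∂μn) := hdiff.symm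
      _ ≤ |(∫ y, f y ∂μm) - (∫ y, f y ∂μn)| := le_abs_self _
      _ ≤ (kstarDist d k μm μn).toReal := hb'
  show ∫ x, |hm x - hn x| ∂volume ≤ c⁻¹ * (kstarDist d k μm μn).toReal
  calc ∫ x, |hm x - hn x| ∂volume = c⁻¹ * (c * ∫ x, |hm x - hn x| ∂volume) := by
        rw [inv_mul_cancel_left₀ hpos.ne']
    _ ≤ c⁻¹ * (kstarDist d k μm μn).toReal :=
        mul_le_mul_of_nonneg_left habs' (inv_nonneg.mpr hpos.le)

end Stmt6Aux

set_option maxHeartbeats 1000000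

/-- Completeness of `(P_{k*}, ‖·‖_{k*})`: every Cauchy sequence converges in
the `k*`-distance to an element of `P_{k*}`. -/
theorem stmt6 (d : ℕ) (hd : 1 ≤ d) (k : ℝ) (hk : 1 ≤ k)
    (μ : ℕ → Measure (EuclideanSpace ℝ (Fin d)))
    (hprob : ∀ n, IsProbabilityMeasure (μ n))
    (hfin : ∀ n, kstarNorm d k (μ n) < ∞)
    (hcauchy : ∀ ε : ℝ≥0∞, 0 < ε → ∃ N : ℕ, ∀ m ≥ N, ∀ n ≥ N,
      kstarDist d k (μ m) (μ n) < ε) :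
    ∃ ν : Measure (EuclideanSpace ℝ (Fin d)), IsProbabilityMeasure ν ∧
      kstarNorm d k ν < ∞ ∧
      Tendsto (fun n => kstarDist d k (μ n) ν) atTop (nhds 0) := by
  classical
  have hac : ∀ n, μ n ≪ volume := fun n => by
    haveI := hprob n; exact Stmt6Aux.ac_of_kstarNorm_lt_top hk (hfin n)
  set h : ℕ → EuclideanSpace ℝ (Fin d) → ℝ :=
    fun n x => ((μ n).rnDeriv volume x).toReal with hh
  have hmeas : ∀ n, Measurable (h n) :=
    fun n => (Measure.measurable_rnDeriv _ _).ennreal_toReal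
  have hint : ∀ n, Integrable (h n) volume := fun n => by
    haveI := hprob n; exact Measure.integrable_toReal_rnDeriv
  have hnn : ∀ n x, 0 ≤ h n x := fun n x => ENNReal.toReal_nonneg
  have hDfin : ∀ m n, kstarDist d k (μ m) (μ n) ≠ ∞ := fun m n =>
    (Stmt6Aux.kstarDist_lt_top (hfin m) (hfin n)).ne
  have hL1 : ∀ m n, ∫ x, |h m x - h n x| ∂volume
      ≤ (Stmt6Aux.c0 d k)⁻¹ * (kstarDist d k (μ m) (μ n)).toReal := fun m n => by
    haveI := hprob m; haveI := hprob n
    exact Stmt6Aux.L1dist_le hk (hac m) (hac n) (hDfin m n)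
  -- the sequence of densities in L¹
  set F : ℕ → (EuclideanSpace ℝ (Fin d) →₁[volume] ℝ) :=
    fun n => (hint n).toL1 (h n) with hF
  have hFdist : ∀ m n, dist (F m) (F n) = ∫ x, |h m x - h n x| ∂volume := fun m n =>
    Stmt6Aux.dist_toL1_eq _ _
  have hcpos : 0 < Stmt6Aux.c0 d k := Stmt6Aux.c0_pos
  have hcau : CauchySeq F := by
    refine Metric.cauchySeq_iff.mpr fun ε hε => ?_
    obtain ⟨N, hN⟩ := hcauchy (ENNReal.ofReal (Stmt6Aux.c0 d k * ε / 2))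
      (ENNReal.ofReal_pos.mpr (by positivity))
    refine ⟨N, fun m hm n hn => ?_⟩
    rw [hFdist]
    have h2 : (kstarDist d k (μ m) (μ n)).toReal < Stmt6Aux.c0 d k * ε / 2 := by
      have h3 := hN m hm n hn
      exact (ENNReal.lt_ofReal_iff_toReal_lt (hDfin m n)).mp h3
    calc ∫ x, |h m x - h n x| ∂volume
        ≤ (Stmt6Aux.c0 d k)⁻¹ * (kstarDist d k (μ m) (μ n)).toReal := hL1 m n
      _ < (Stmt6Aux.c0 d k)⁻¹ * (Stmt6Aux.c0 d k * ε / 2) := by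
          exact mul_lt_mul_of_pos_left h2 (inv_pos.mpr hcpos)
      _ = ε / 2 := by field_simp
      _ < ε := by linarith
  obtain ⟨G, hG⟩ := cauchySeq_tendsto_of_complete hcau
  -- measurable representative of the limit
  have hGaem := (MeasureTheory.Lp.aestronglyMeasurable G)
  set φ : EuclideanSpace ℝ (Fin d) → ℝ := hGaem.mk G with hφdef
  have hφmeas : Measurable φ := hGaem.stronglyMeasurable_mk.measurable
  have hφae : ⇑G =ᵐ[volume] φ := hGaem.ae_eq_mk
  have hφint : Integrable φ volume := (MeasureTheory.L1.integrable_coeFn G).congr hφae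
  have hFG : hφint.toL1 φ = G := by
    rw [← Integrable.toL1_coeFn G (MeasureTheory.L1.integrable_coeFn G)]
    exact (Integrable.toL1_eq_toL1_iff _ _ _ _).mpr hφae.symm
  have hL1conv : Tendsto (fun m => ∫ x, |h m x - φ x| ∂volume) atTop (𝓝 0) := by
    have h5 := tendsto_iff_dist_tendsto_zero.mp hG
    refine h5.congr fun m => ?_
    rw [← hFG, Stmt6Aux.dist_toL1_eq (hint m) hφint]
  -- eLpNorm convergence and an a.e. convergent subsequence
  have hsnormEq : ∀ m, eLpNorm (h m - φ) 1 volume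
      = ENNReal.ofReal (∫ x, |h m x - φ x| ∂volume) := by
    intro m
    rw [eLpNorm_one_eq_lintegral_enorm]
    have hint2 : Integrable (fun x => |h m x - φ x|) volume := ((hint m).sub hφint).abs
    rw [ofReal_integral_eq_lintegral_ofReal hint2 (Eventually.of_forall fun x => abs_nonneg _)]
    refine lintegral_congr fun x => ?_
    rw [← ofReal_norm]
    simp [Real.norm_eq_abs]
  have hsnorm : Tendsto (fun m => eLpNorm (h m - φ) 1 volume) atTop (𝓝 0) := by
    have h6 : Tendsto (fun m => ENNReal.ofReal (∫ x, |h m x - φ x| ∂volume)) atTop (𝓝 0) := by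
      have := ENNReal.tendsto_ofReal hL1conv
      simpa using this
    exact h6.congr fun m => (hsnormEq m).symm
  have hmeaconv : TendstoInMeasure volume h atTop φ :=
    tendstoInMeasure_of_tendsto_eLpNorm one_ne_zero
      (fun m => (hmeas m).aestronglyMeasurable) hφmeas.aestronglyMeasurable hsnorm
  obtain ⟨ms, hms_mono, hms_ae⟩ := hmeaconv.exists_seq_tendsto_ae
  have hφnn : 0 ≤ᵐ[volume] φ := by
    filter_upwards [hms_ae] with x hx
    exact ge_of_tendsto' hx fun j => hnn (ms j) x
  -- the candidate limit measure
  set ν : Measure (EuclideanSpace ℝ (Fin d)) :=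
    volume.withDensity (fun x => ENNReal.ofReal (φ x)) with hνdef
  have hG2meas : Measurable (fun x => ENNReal.ofReal (φ x)) := hφmeas.ennreal_ofReal
  -- integrals of h m converge to the integral of φ
  have hint_conv : Tendsto (fun m => ∫ x, h m x ∂volume) atTop (𝓝 (∫ x, φ x ∂volume)) := by
    refine tendsto_integral_of_L1 φ hφint.aestronglyMeasurable (Eventually.of_forall hint) ?_
    have h7 : ∀ m, ∫⁻ x, (‖h m x - φ x‖₊ : ℝ≥0∞) ∂volume = eLpNorm (h m - φ) 1 volume := by
      intro m; rw [eLpNorm_one_eq_lintegral_enorm]; rfl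
    exact hsnorm.congr fun m => (h7 m).symm
  have hφone : ∫ x, φ x ∂volume = 1 := by
    have h1 : ∀ m, ∫ x, h m x ∂volume = 1 := fun m => by
      haveI := hprob m
      rw [hh]
      rw [Measure.integral_toReal_rnDeriv (hac m)]
      simp
    refine tendsto_nhds_unique ?_ hint_conv |>.symm
    have heq1 : (fun m => ∫ x, h m x ∂volume) = fun _ => (1:ℝ) := funext h1
    rw [heq1]
    exact tendsto_const_nhds
  haveI hνprob : IsProbabilityMeasure ν := by
    constructor
    rw [hνdef, withDensity_apply _ MeasurableSet.univ, Measure.restrict_univ,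
      ← ofReal_integral_eq_lintegral_ofReal hφint hφnn, hφone, ENNReal.ofReal_one]
  -- integral representation for ν and μ m
  have hrep : ∀ m (u : EuclideanSpace ℝ (Fin d) → ℝ),
      ∫ y, u y ∂(μ m) = ∫ x, h m x * u x ∂volume := by
    intro m u
    rw [← MeasureTheory.integral_rnDeriv_smul (hac m)]
    simp only [smul_eq_mul]
    rfl
  have hν_int : ∀ (u : EuclideanSpace ℝ (Fin d) → ℝ),
      ∫ y, u y ∂ν = ∫ x, φ x * u x ∂volume := by
    intro u
    have hcast : (fun x => ENNReal.ofReal (φ x))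
        = (fun x => ((fun y => Real.toNNReal (φ y)) x : ℝ≥0∞)) := rfl
    rw [hνdef, hcast, integral_withDensity_eq_integral_smul hφmeas.real_toNNReal u]
    refine integral_congr_ae ?_
    filter_upwards [hφnn] with x hx
    simp [NNReal.smul_def, Real.coe_toNNReal _ hx]
  -- uniform bound on the k*-norms
  obtain ⟨N1, hN1⟩ := hcauchy 1 zero_lt_one
  set C : ℝ≥0∞ := kstarNorm d k (μ N1) + 1 with hCdef
  have hCfin : C ≠ ∞ := by
    rw [hCdef]
    exact (ENNReal.add_lt_top.mpr ⟨hfin N1, ENNReal.one_lt_top⟩).ne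
  have hCb : ∀ m, N1 ≤ m → ∀ (f : EuclideanSpace ℝ (Fin d) → ℝ), Measurable f →
      tildeLnorm d k f ≤ 1 → ∫⁻ y, ENNReal.ofReal |f y| ∂(μ m) ≤ C := by
    intro m hm f hfm hf1
    refine le_trans (Stmt6Aux.lintegral_abs_le_of_dist (hfin m) (hfin N1) hfm hf1) ?_
    exact add_le_add_right (hN1 m hm N1 le_rfl).le _
  -- the limit measure has finite k*-norm
  have hνnorm : kstarNorm d k ν ≤ C := by
    refine iSup₂_le fun f hf => ?_
    obtain ⟨hfm, hf1⟩ := hf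
    have hfabs : Measurable (fun y => ENNReal.ofReal |f y|) := hfm.abs.ennreal_ofReal
    rw [hνdef, lintegral_withDensity_eq_lintegral_mul volume hG2meas hfabs]
    simp only [Pi.mul_apply]
    have key : ∀ j, ∫⁻ x, ENNReal.ofReal (h (ms j) x) * ENNReal.ofReal |f x| ∂volume
        = ∫⁻ y, ENNReal.ofReal |f y| ∂(μ (ms j)) := by
      intro j
      rw [← MeasureTheory.lintegral_rnDeriv_mul (hac (ms j)) hfabs.aemeasurable]
      refine lintegral_congr_ae ?_
      filter_upwards [Measure.rnDeriv_lt_top (μ (ms j)) volume] with x hx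
      rw [hh]
      rw [ENNReal.ofReal_toReal hx.ne]
    have hle1 : ∫⁻ x, ENNReal.ofReal (φ x) * ENNReal.ofReal |f x| ∂volume
        ≤ liminf (fun j => ∫⁻ x, ENNReal.ofReal (h (ms j) x) * ENNReal.ofReal |f x| ∂volume)
          atTop := by
      refine le_trans (le_of_eq (lintegral_congr_ae ?_))
        (lintegral_liminf_le fun j => ((hmeas (ms j)).ennreal_ofReal.mul hfabs))
      filter_upwards [hms_ae] with x hx
      exact ((ENNReal.Tendsto.mul_const (ENNReal.tendsto_ofReal hx)
        (Or.inr ENNReal.ofReal_ne_top)).liminf_eq).symm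
    refine le_trans hle1 ?_
    have hev : ∀ᶠ j in atTop,
        ∫⁻ x, ENNReal.ofReal (h (ms j) x) * ENNReal.ofReal |f x| ∂volume ≤ C := by
      filter_upwards [eventually_ge_atTop N1] with j hj
      rw [key j]
      exact hCb (ms j) (le_trans hj (hms_mono.le_apply)) f hfm hf1
    calc liminf (fun j => ∫⁻ x, ENNReal.ofReal (h (ms j) x) * ENNReal.ofReal |f x| ∂volume) atTop
        ≤ liminf (fun _ => C) atTop := liminf_le_liminf hev
      _ = C := liminf_const C
  have hνfin : kstarNorm d k ν < ∞ := lt_of_le_of_lt hνnorm (lt_top_iff_ne_top.mpr hCfin)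
  -- crux: integrals of admissible functions converge
  have hcrux : ∀ (f : EuclideanSpace ℝ (Fin d) → ℝ), Measurable f → tildeLnorm d k f ≤ 1 →
      Tendsto (fun m => ∫ y, f y ∂(μ m)) atTop (𝓝 (∫ y, f y ∂ν)) := by
    intro f hfm hf1
    have hfν : Integrable f ν := Stmt6Aux.integrable_of_admissible hνfin hfm hf1
    have hfμ : ∀ m, Integrable f (μ m) := fun m =>
      Stmt6Aux.integrable_of_admissible (hfin m) hfm hf1
    have hint_hf : ∀ m, Integrable (fun x => h m x * f x) volume := fun m => by
      have h8 := (MeasureTheory.integrable_rnDeriv_smul_iff (hac m)).mpr (hfμ m)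
      simpa [smul_eq_mul] using h8
    have hint_φu : ∀ (u : EuclideanSpace ℝ (Fin d) → ℝ), Integrable u ν →
        Integrable (fun x => φ x * u x) volume := by
      intro u hu
      rw [hνdef] at hu
      have h9 := (integrable_withDensity_iff_integrable_smul' hG2meas
        (ae_of_all _ fun x => ENNReal.ofReal_lt_top)).mp hu
      refine h9.congr ?_
      filter_upwards [hφnn] with x hx
      simp [ENNReal.toReal_ofReal hx, smul_eq_mul]
    have hint_φf : Integrable (fun x => φ x * f x) volume := hint_φu f hfν
    rw [show (∫ y, f y ∂ν) = ∫ x, φ x * f x ∂volume from hν_int f]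
    have hrepm : (fun m => ∫ y, f y ∂(μ m)) = fun m => ∫ x, h m x * f x ∂volume :=
      funext fun m => hrep m f
    rw [hrepm]
    refine Metric.tendsto_atTop.mpr fun ε hε => ?_
    have hε5 : 0 < ε/5 := by linarith
    obtain ⟨N2, hN2⟩ := hcauchy (ENNReal.ofReal (ε/5)) (ENNReal.ofReal_pos.mpr hε5)
    -- truncation functions
    set g : ℕ → EuclideanSpace ℝ (Fin d) → ℝ :=
      fun M x => if (M:ℝ) < |f x| then |f x| else 0 with hgdef
    have hgm : ∀ M, Measurable (g M) := fun M =>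
      Measurable.ite (measurableSet_lt measurable_const hfm.abs) hfm.abs measurable_const
    have hgb : ∀ M x, |g M x| ≤ |f x| := by
      intro M x
      by_cases hx : (M:ℝ) < |f x|
      · simp [hgdef, hx, abs_abs]
      · simp [hgdef, hx, abs_nonneg]
    have hg1 : ∀ M, tildeLnorm d k (g M) ≤ 1 := fun M =>
      le_trans (Stmt6Aux.tildeLnorm_mono hk (hgb M)) hf1
    have hgnn : ∀ M x, 0 ≤ g M x := by
      intro M x
      by_cases hx : (M:ℝ) < |f x|
      · simp [hgdef, hx, abs_nonneg]
      · simp [hgdef, hx]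
    -- tails tend to zero
    have htail : ∀ (ρ : Measure (EuclideanSpace ℝ (Fin d))), Integrable f ρ →
        Tendsto (fun M : ℕ => ∫ x, g M x ∂ρ) atTop (𝓝 0) := by
      intro ρ hfρ
      have h10 := tendsto_integral_of_dominated_convergence (μ := ρ)
        (F := g) (f := fun _ => (0:ℝ)) (bound := fun x => |f x|)
        (fun M => (hgm M).aestronglyMeasurable) hfρ.abs
        (fun M => ae_of_all _ fun x => by
          rw [Real.norm_eq_abs]; exact hgb M x)
        (ae_of_all _ fun x => ?_)
      · simpa using h10
      · have hev0 : ∀ᶠ M in atTop, g M x = 0 :=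
          eventually_atTop.mpr ⟨⌈|f x|⌉₊, fun M hM =>
            if_neg (not_lt.mpr ((Nat.le_ceil _).trans (Nat.cast_le.mpr hM)))⟩
        exact Tendsto.congr' (hev0.mono fun M hM => hM.symm) tendsto_const_nhds
    obtain ⟨M1, hM1⟩ := Metric.tendsto_atTop.mp (htail ν hfν) (ε/5) hε5
    obtain ⟨M2, hM2⟩ := Metric.tendsto_atTop.mp (htail (μ N2) (hfμ N2)) (ε/5) hε5
    set M : ℕ := max M1 M2 with hMdef
    have hgν : ∫ x, g M x ∂ν < ε/5 := by
      have := hM1 M (le_max_left _ _)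
      rwa [Real.dist_eq, sub_zero, abs_of_nonneg (integral_nonneg (hgnn M))] at this
    have hgN2 : ∫ x, g M x ∂(μ N2) < ε/5 := by
      have := hM2 M (le_max_right _ _)
      rwa [Real.dist_eq, sub_zero, abs_of_nonneg (integral_nonneg (hgnn M))] at this
    obtain ⟨N3, hN3⟩ := Metric.tendsto_atTop.mp hL1conv (ε/(5*(M+1))) (by positivity)
    refine ⟨max N2 N3, fun m hm => ?_⟩
    have hmN2 : N2 ≤ m := le_trans (le_max_left _ _) hm
    have hmN3 : N3 ≤ m := le_trans (le_max_right _ _) hm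
    -- tail bound for μ m
    have htm : ∫ x, g M x ∂(μ m) < 2*(ε/5) := by
      have hd := hN2 m hmN2 N2 le_rfl
      have habs2 := Stmt6Aux.abs_le_kstarDist (μ := μ m) (ν := μ N2) (hgm M) (hg1 M)
      have h11 : |(∫ y, g M y ∂(μ m)) - (∫ y, g M y ∂(μ N2))| < ε/5 :=
        (ENNReal.ofReal_lt_ofReal_iff hε5).mp (lt_of_le_of_lt habs2 hd)
      have h12 := le_abs_self ((∫ y, g M y ∂(μ m)) - (∫ y, g M y ∂(μ N2)))
      linarith
    have hL1m : ∫ x, |h m x - φ x| ∂volume < ε/(5*(M+1)) := by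
      have := hN3 m hmN3
      rwa [Real.dist_eq, sub_zero,
        abs_of_nonneg (integral_nonneg fun x => abs_nonneg _)] at this
    -- main estimate
    rw [Real.dist_eq]
    have e1 : (∫ x, h m x * f x ∂volume) - ∫ x, φ x * f x ∂volume
        = ∫ x, (h m x - φ x) * f x ∂volume := by
      rw [← integral_sub (hint_hf m) hint_φf]
      congr 1
      funext x
      ring
    rw [e1]
    have e2 : |∫ x, (h m x - φ x) * f x ∂volume| ≤ ∫ x, |(h m x - φ x) * f x| ∂volume := by
      simpa only [Real.norm_eq_abs] using
        norm_integral_le_integral_norm (μ := volume) (fun x => (h m x - φ x) * f x)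
    have hint1 : Integrable (fun x => (M:ℝ) * |h m x - φ x|) volume :=
      (((hint m).sub hφint).abs).const_mul _
    have hint2 : Integrable (fun x => h m x * g M x) volume := by
      have h13 := (MeasureTheory.integrable_rnDeriv_smul_iff (hac m)).mpr
        (Stmt6Aux.integrable_of_admissible (hfin m) (hgm M) (hg1 M))
      simpa [smul_eq_mul] using h13
    have hint3 : Integrable (fun x => φ x * g M x) volume :=
      hint_φu (g M) (Stmt6Aux.integrable_of_admissible hνfin (hgm M) (hg1 M))
    have hintR : Integrable
        (fun x => (M:ℝ) * |h m x - φ x| + (h m x * g M x + φ x * g M x)) volume :=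
      hint1.add (hint2.add hint3)
    have hptw : ∀ᵐ x ∂volume, |(h m x - φ x) * f x|
        ≤ (M:ℝ) * |h m x - φ x| + (h m x * g M x + φ x * g M x) := by
      filter_upwards [hφnn] with x hx
      rw [abs_mul]
      by_cases hfx : (M:ℝ) < |f x|
      · have hgx : g M x = |f x| := if_pos hfx
        rw [hgx]
        have habs3 : |h m x - φ x| ≤ h m x + φ x := by
          have := abs_sub (h m x) (φ x)
          rw [abs_of_nonneg (hnn m x), abs_of_nonneg hx] at this
          exact this
        have h14 : |h m x - φ x| * |f x| ≤ (h m x + φ x) * |f x| :=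
          mul_le_mul_of_nonneg_right habs3 (abs_nonneg _)
        have h15 : (0:ℝ) ≤ (M:ℝ) * |h m x - φ x| := by positivity
        rw [add_mul] at h14
        linarith
      · have hgx : g M x = 0 := if_neg hfx
        rw [hgx]
        have h16 : |f x| ≤ (M:ℝ) := not_lt.mp hfx
        have h17 : |h m x - φ x| * |f x| ≤ |h m x - φ x| * (M:ℝ) :=
          mul_le_mul_of_nonneg_left h16 (abs_nonneg _)
        rw [mul_zero, mul_zero, add_zero, add_zero, mul_comm (M:ℝ)]
        exact h17
    have hintL : Integrable (fun x => |(h m x - φ x) * f x|) volume := by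
      refine Integrable.mono' hintR
        (((hmeas m).sub hφmeas).mul hfm).abs.aestronglyMeasurable ?_
      filter_upwards [hptw] with x hx
      rw [Real.norm_eq_abs, abs_abs]
      exact hx
    have e3 : ∫ x, |(h m x - φ x) * f x| ∂volume
        ≤ ∫ x, ((M:ℝ) * |h m x - φ x| + (h m x * g M x + φ x * g M x)) ∂volume :=
      integral_mono_ae hintL hintR hptw
    have e4 : ∫ x, ((M:ℝ) * |h m x - φ x| + (h m x * g M x + φ x * g M x)) ∂volume
        = (M:ℝ) * (∫ x, |h m x - φ x| ∂volume)
          + ((∫ y, g M y ∂(μ m)) + (∫ y, g M y ∂ν)) := by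
      have hint23 : Integrable (fun x => h m x * g M x + φ x * g M x) volume :=
        hint2.add hint3
      rw [integral_add hint1 hint23, integral_add hint2 hint3,
        integral_const_mul, ← hrep m (g M), ← hν_int (g M)]
    have e5 : (M:ℝ) * (∫ x, |h m x - φ x| ∂volume) ≤ ε/5 := by
      have h18 : (M:ℝ) * (∫ x, |h m x - φ x| ∂volume) ≤ (M:ℝ) * (ε/(5*(M+1))) :=
        mul_le_mul_of_nonneg_left hL1m.le (Nat.cast_nonneg _)
      have h19 : (M:ℝ) * (ε/(5*((M:ℝ)+1))) ≤ ε/5 := by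
        rw [← mul_div_assoc, div_le_div_iff₀ (by positivity) (by norm_num : (0:ℝ) < 5)]
        nlinarith [Nat.cast_nonneg (α := ℝ) M, hε.le]
      linarith
    calc |∫ x, (h m x - φ x) * f x ∂volume|
        ≤ ∫ x, |(h m x - φ x) * f x| ∂volume := e2
      _ ≤ (M:ℝ) * (∫ x, |h m x - φ x| ∂volume)
          + ((∫ y, g M y ∂(μ m)) + (∫ y, g M y ∂ν)) := le_trans e3 (le_of_eq e4)
      _ < ε/5 + (2*(ε/5) + ε/5) := by
          have := add_lt_add htm hgν
          have := add_le_add_right e5 ((∫ y, g M y ∂(μ m)) + (∫ y, g M y ∂ν))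
          linarith
      _ ≤ ε := by linarith
  -- conclusion
  refine ⟨ν, hνprob, hνfin, ?_⟩
  rw [ENNReal.tendsto_atTop_zero]
  intro ε hε
  set ε' : ℝ≥0∞ := min ε 1 with hε'def
  have hε'pos : 0 < ε' := lt_min hε zero_lt_one
  have hε'top : ε' ≠ ∞ := ne_top_of_le_ne_top ENNReal.one_ne_top (min_le_right _ _)
  obtain ⟨N, hN⟩ := hcauchy ε' hε'pos
  refine ⟨N, fun n hn => ?_⟩
  have hsub : kstarDist d k (μ n) ν ≤ ε' := by
    refine iSup₂_le fun f hf => ?_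
    obtain ⟨hfm, hf1⟩ := hf
    have htt : Tendsto (fun m => |(∫ y, f y ∂(μ n)) - (∫ y, f y ∂(μ m))|) atTop
        (𝓝 |(∫ y, f y ∂(μ n)) - (∫ y, f y ∂ν)|) :=
      (tendsto_const_nhds.sub (hcrux f hfm hf1)).abs
    have hev : ∀ᶠ m in atTop, |(∫ y, f y ∂(μ n)) - (∫ y, f y ∂(μ m))| ≤ ε'.toReal := by
      filter_upwards [eventually_ge_atTop N] with m hm
      have h20 := hN n hn m hm
      have h21 := Stmt6Aux.abs_le_kstarDist (μ := μ n) (ν := μ m) hfm hf1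
      have h22 : ENNReal.ofReal |(∫ y, f y ∂(μ n)) - (∫ y, f y ∂(μ m))| < ε' :=
        lt_of_le_of_lt h21 h20
      exact ((ENNReal.ofReal_lt_iff_lt_toReal (abs_nonneg _) hε'top).mp h22).le
    have hle : |(∫ y, f y ∂(μ n)) - (∫ y, f y ∂ν)| ≤ ε'.toReal := le_of_tendsto htt hev
    calc ENNReal.ofReal |(∫ y, f y ∂(μ n)) - (∫ y, f y ∂ν)|
        ≤ ENNReal.ofReal ε'.toReal := ENNReal.ofReal_le_ofReal hle
      _ = ε' := ENNReal.ofReal_toReal hε'top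
  exact hsub.trans (min_le_left _ _)
end

section
/- For every θ ∈ (0, 1/2] there exists a constant c ∈ (0,∞), depending only on θ, such that for all λ ∈ (0,∞) and all s ∈ (0,∞): s^{1/2} · ∫_0^s r^{θ−1} · e^{−λ(s−r)} · (s−r)^{−1/2} dr ≤ c · λ^{−θ}. -/
open MeasureTheory

private lemma ioo_rpow_integral {a b p : ℝ} (hab : a ≤ b)
    (h : -1 < p ∨ p ≠ -1 ∧ (0:ℝ) ∉ Set.uIcc a b) :
    ∫ x in Set.Ioo a b, x ^ p = (b ^ (p + 1) - a ^ (p + 1)) / (p + 1) := by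
  rw [← MeasureTheory.integral_Ioc_eq_integral_Ioo, ← intervalIntegral.integral_of_le hab,
    integral_rpow h]

private lemma ioo_rpow_integrable {a b p : ℝ} (hab : a ≤ b) (hp : -1 < p) :
    IntegrableOn (fun x : ℝ => x ^ p) (Set.Ioo a b) :=
  (intervalIntegrable_iff_integrableOn_Ioo_of_le hab).mp
    (intervalIntegral.intervalIntegrable_rpow' hp)

private lemma ioo_rpow_integrable' {a b p : ℝ} (hab : a ≤ b) (ha : 0 < a) :
    IntegrableOn (fun x : ℝ => x ^ p) (Set.Ioo a b) := by
  refine (intervalIntegrable_iff_integrableOn_Ioo_of_le hab).mp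
    (intervalIntegral.intervalIntegrable_rpow (Or.inr ?_))
  rw [Set.uIcc_of_le hab]
  rintro ⟨h0, -⟩
  exact absurd h0 (not_le.mpr ha)

/-- `exp (-x) ≤ 4 * x ^ (-2)` for positive `x`. -/
private lemma exp_neg_le_rpow {x : ℝ} (hx : 0 < x) : Real.exp (-x) ≤ 4 * x ^ (-(2:ℝ)) := by
  have h1 := Real.add_one_le_exp (x / 2)
  have h2 : Real.exp (x / 2) * Real.exp (x / 2) = Real.exp x := by
    rw [← Real.exp_add]; ring_nf
  have hE := Real.exp_pos (x / 2)
  have hEx := Real.exp_pos x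
  have hx2 : x ^ (-(2:ℝ)) = (x ^ 2)⁻¹ := by
    rw [Real.rpow_neg hx.le, show ((2:ℝ)) = ((2:ℕ):ℝ) by norm_num, Real.rpow_natCast]
  rw [Real.exp_neg, hx2]
  calc (Real.exp x)⁻¹ = 1 / Real.exp x := (inv_eq_one_div _)
    _ ≤ 4 / x ^ 2 := by
        rw [div_le_div_iff₀ hEx (by positivity)]
        nlinarith
    _ = 4 * (x ^ 2)⁻¹ := by rw [div_eq_mul_inv]

private lemma phi_contOn {lam a b : ℝ} (ha : 0 ≤ a) :
    ContinuousOn (fun u : ℝ => Real.exp (-(lam * u)) * u ^ (-(1:ℝ)/2)) (Set.Ioo a b) := by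
  refine ContinuousOn.mul ?_ ?_
  · exact (Real.continuous_exp.comp (continuous_const.mul continuous_id).neg).continuousOn
  · exact ContinuousOn.rpow_const continuousOn_id fun x hx => Or.inl
      (lt_of_le_of_lt ha hx.1).ne'

private lemma exp_term_le_one {lam u : ℝ} (hl : 0 ≤ lam) (hu : 0 ≤ u) :
    Real.exp (-(lam * u)) ≤ 1 := by
  rw [show (1:ℝ) = Real.exp 0 from Real.exp_zero.symm]
  exact Real.exp_le_exp.mpr (by nlinarith [mul_nonneg hl hu])

private lemma phi_integrableOn {lam s : ℝ} (hl : 0 ≤ lam) (hs : 0 < s) :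
    IntegrableOn (fun u : ℝ => Real.exp (-(lam * u)) * u ^ (-(1:ℝ)/2)) (Set.Ioo 0 s) := by
  refine Integrable.mono' (ioo_rpow_integrable hs.le (by norm_num : (-1:ℝ) < -(1:ℝ)/2))
    ((phi_contOn le_rfl).aestronglyMeasurable measurableSet_Ioo) ?_
  rw [ae_restrict_iff' measurableSet_Ioo]
  refine Filter.Eventually.of_forall fun u hu => ?_
  have hu0 : (0:ℝ) < u := hu.1
  have h1 : 0 ≤ u ^ (-(1:ℝ)/2) := Real.rpow_nonneg hu0.le _
  have h2 : Real.exp (-(lam * u)) * u ^ (-(1:ℝ)/2) ≤ 1 * u ^ (-(1:ℝ)/2) :=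
    mul_le_mul_of_nonneg_right (exp_term_le_one hl hu0.le) h1
  rw [Real.norm_eq_abs, abs_of_nonneg (mul_nonneg (Real.exp_nonneg _) h1)]
  linarith

/-- First bound: `∫_0^s e^{-λu} u^{-1/2} ≤ 2 √s`. -/
private lemma Kbound1 {lam s : ℝ} (hl : 0 ≤ lam) (hs : 0 < s) :
    (∫ u in Set.Ioo (0:ℝ) s, Real.exp (-(lam * u)) * u ^ (-(1:ℝ)/2))
      ≤ 2 * s ^ ((1:ℝ)/2) := by
  have hmono : (∫ u in Set.Ioo (0:ℝ) s, Real.exp (-(lam * u)) * u ^ (-(1:ℝ)/2))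
      ≤ ∫ u in Set.Ioo (0:ℝ) s, u ^ (-(1:ℝ)/2) := by
    refine setIntegral_mono_on (phi_integrableOn hl hs)
      (ioo_rpow_integrable hs.le (by norm_num)) measurableSet_Ioo fun u hu => ?_
    have h1 : 0 ≤ u ^ (-(1:ℝ)/2) := Real.rpow_nonneg hu.1.le _
    have := mul_le_mul_of_nonneg_right (exp_term_le_one hl hu.1.le) h1
    linarith
  have hcalc : (∫ u in Set.Ioo (0:ℝ) s, u ^ (-(1:ℝ)/2)) = 2 * s ^ ((1:ℝ)/2) := by
    rw [ioo_rpow_integral hs.le (Or.inl (by norm_num))]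
    rw [show (-(1:ℝ)/2 + 1) = (1:ℝ)/2 by norm_num, Real.zero_rpow (by norm_num : (1:ℝ)/2 ≠ 0)]
    ring
  linarith

/-- Second bound: `∫_0^s e^{-λu} u^{-1/2} ≤ 6 λ^{-1/2}`. -/
private lemma Kbound2 {lam s : ℝ} (hl : 0 < lam) (hs : 0 < s) :
    (∫ u in Set.Ioo (0:ℝ) s, Real.exp (-(lam * u)) * u ^ (-(1:ℝ)/2))
      ≤ 6 * lam ^ (-(1:ℝ)/2) := by
  have hinvl : (0:ℝ) < 1 / lam := by positivity
  have hlneg : lam ^ (-(1:ℝ)/2) = (lam ^ ((1:ℝ)/2))⁻¹ := by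
    rw [show (-(1:ℝ)/2) = -((1:ℝ)/2) by ring, Real.rpow_neg hl.le]
  have hinvpow : (1 / lam) ^ ((1:ℝ)/2) = lam ^ (-(1:ℝ)/2) := by
    rw [one_div, Real.inv_rpow hl.le, hlneg]
  rcases le_or_gt s (1 / lam) with hcase | hcase
  · have h1 := Kbound1 (lam := lam) hl.le hs
    have h2 : s ^ ((1:ℝ)/2) ≤ (1/lam) ^ ((1:ℝ)/2) :=
      Real.rpow_le_rpow hs.le hcase (by norm_num)
    have h3 : (0:ℝ) ≤ lam ^ (-(1:ℝ)/2) := Real.rpow_nonneg hl.le _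
    rw [hinvpow] at h2
    linarith
  · -- split at 1/lam
    have hsplit : Set.Ioo (0:ℝ) (1/lam) ∪ Set.Ico (1/lam) s = Set.Ioo (0:ℝ) s :=
      Set.Ioo_union_Ico_eq_Ioo hinvl hcase.le
    have hdisj : Disjoint (Set.Ioo (0:ℝ) (1/lam)) (Set.Ico (1/lam) s) := by
      rw [Set.disjoint_left]
      rintro x ⟨-, h1⟩ ⟨h2, -⟩
      exact absurd h2 (not_le.mpr h1)
    have hrestr : volume.restrict (Set.Ico (1/lam) s) = volume.restrict (Set.Ioo (1/lam) s) :=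
      (Measure.restrict_congr_set Ioo_ae_eq_Ico).symm
    have hphi_meas : AEStronglyMeasurable
        (fun u : ℝ => Real.exp (-(lam * u)) * u ^ (-(1:ℝ)/2))
        (volume.restrict (Set.Ico (1/lam) s)) := by
      rw [hrestr]
      exact (phi_contOn hinvl.le).aestronglyMeasurable measurableSet_Ioo
    -- pointwise bound on the second piece
    have hptwise : ∀ u ∈ Set.Ico (1/lam) s,
        Real.exp (-(lam * u)) * u ^ (-(1:ℝ)/2) ≤ 4 * lam ^ (-(3:ℝ)/2) * u ^ (-(2:ℝ)) := by
      intro u hu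
      have hu0 : (0:ℝ) < u := lt_of_lt_of_le hinvl hu.1
      have hlu1 : (1:ℝ) ≤ lam * u := by
        have h := hu.1
        rw [div_le_iff₀ hl] at h
        linarith [mul_comm u lam, h]
      have hlu0 : (0:ℝ) < lam * u := by positivity
      have e1 : Real.exp (-(lam * u)) ≤ 4 * (lam * u) ^ (-(2:ℝ)) := exp_neg_le_rpow hlu0
      have e2 : (lam * u) ^ (-(2:ℝ)) ≤ (lam * u) ^ (-(3:ℝ)/2) :=
        Real.rpow_le_rpow_of_exponent_le hlu1 (by norm_num)
      have e3 : (lam * u) ^ (-(3:ℝ)/2) = lam ^ (-(3:ℝ)/2) * u ^ (-(3:ℝ)/2) :=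
        Real.mul_rpow hl.le hu0.le
      have e4 : u ^ (-(3:ℝ)/2) * u ^ (-(1:ℝ)/2) = u ^ (-(2:ℝ)) := by
        rw [← Real.rpow_add hu0]; norm_num
      have h5 : Real.exp (-(lam * u)) ≤ 4 * (lam ^ (-(3:ℝ)/2) * u ^ (-(3:ℝ)/2)) := by
        rw [← e3]; linarith
      calc Real.exp (-(lam * u)) * u ^ (-(1:ℝ)/2)
          ≤ 4 * (lam ^ (-(3:ℝ)/2) * u ^ (-(3:ℝ)/2)) * u ^ (-(1:ℝ)/2) :=
            mul_le_mul_of_nonneg_right h5 (Real.rpow_nonneg hu0.le _)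
        _ = 4 * lam ^ (-(3:ℝ)/2) * (u ^ (-(3:ℝ)/2) * u ^ (-(1:ℝ)/2)) := by ring
        _ = 4 * lam ^ (-(3:ℝ)/2) * u ^ (-(2:ℝ)) := by rw [e4]
    have hgint : IntegrableOn (fun u : ℝ => 4 * lam ^ (-(3:ℝ)/2) * u ^ (-(2:ℝ)))
        (Set.Ico (1/lam) s) := by
      rw [IntegrableOn, hrestr]
      exact (ioo_rpow_integrable' hcase.le hinvl).const_mul _
    have hphiint2 : IntegrableOn (fun u : ℝ => Real.exp (-(lam * u)) * u ^ (-(1:ℝ)/2))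
        (Set.Ico (1/lam) s) := by
      refine Integrable.mono' hgint hphi_meas ?_
      rw [ae_restrict_iff' measurableSet_Ico]
      refine Filter.Eventually.of_forall fun u hu => ?_
      have hu0 : (0:ℝ) < u := lt_of_lt_of_le hinvl hu.1
      rw [Real.norm_eq_abs, abs_of_nonneg
        (mul_nonneg (Real.exp_nonneg _) (Real.rpow_nonneg hu0.le _))]
      exact hptwise u hu
    have hphiint1 : IntegrableOn (fun u : ℝ => Real.exp (-(lam * u)) * u ^ (-(1:ℝ)/2))
        (Set.Ioo (0:ℝ) (1/lam)) := phi_integrableOn hl.le hinvl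
    rw [← hsplit, setIntegral_union hdisj measurableSet_Ico hphiint1 hphiint2]
    -- first piece
    have hfirst : (∫ u in Set.Ioo (0:ℝ) (1/lam), Real.exp (-(lam * u)) * u ^ (-(1:ℝ)/2))
        ≤ 2 * lam ^ (-(1:ℝ)/2) := by
      have := Kbound1 (lam := lam) hl.le hinvl
      rw [hinvpow] at this
      exact this
    -- second piece
    have hnotmem : (0:ℝ) ∉ Set.uIcc (1/lam) s := by
      rw [Set.uIcc_of_le hcase.le]
      rintro ⟨h0, -⟩
      exact absurd h0 (not_le.mpr hinvl)
    have hsecond : (∫ u in Set.Ico (1/lam) s, Real.exp (-(lam * u)) * u ^ (-(1:ℝ)/2))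
        ≤ 4 * lam ^ (-(1:ℝ)/2) := by
      have hmono := setIntegral_mono_on hphiint2 hgint measurableSet_Ico hptwise
      have hinv1 : (1/lam) ^ (-(2:ℝ) + 1) = lam := by
        rw [show (-(2:ℝ) + 1) = -(1:ℝ) by norm_num, one_div,
          Real.rpow_neg (inv_nonneg.mpr hl.le), Real.rpow_one, inv_inv]
      have hll : lam ^ (-(3:ℝ)/2) * lam = lam ^ (-(1:ℝ)/2) := by
        nth_rewrite 2 [show lam = lam ^ (1:ℝ) from (Real.rpow_one lam).symm]
        rw [← Real.rpow_add hl]; norm_num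
      have hval : (∫ u in Set.Ico (1/lam) s, 4 * lam ^ (-(3:ℝ)/2) * u ^ (-(2:ℝ)))
          ≤ 4 * lam ^ (-(1:ℝ)/2) := by
        rw [MeasureTheory.integral_Ico_eq_integral_Ioo, integral_const_mul,
          ioo_rpow_integral hcase.le (Or.inr ⟨by norm_num, hnotmem⟩), hinv1,
          show (-(2:ℝ) + 1) = -(1:ℝ) by norm_num]
        have hs1 : (0:ℝ) < s ^ (-(1:ℝ)) := Real.rpow_pos_of_pos hs _
        have heq : (s ^ (-(1:ℝ)) - lam) / (-1:ℝ) = lam - s ^ (-(1:ℝ)) := by ring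
        have h1 : (s ^ (-(1:ℝ)) - lam) / (-1:ℝ) ≤ lam := by rw [heq]; linarith
        calc 4 * lam ^ (-(3:ℝ)/2) * ((s ^ (-(1:ℝ)) - lam) / (-1:ℝ))
            ≤ 4 * lam ^ (-(3:ℝ)/2) * lam := by
              refine mul_le_mul_of_nonneg_left h1 ?_
              positivity
          _ = 4 * lam ^ (-(1:ℝ)/2) := by rw [mul_assoc, hll]
      linarith
    linarith

set_option maxHeartbeats 1000000 in
theorem stmt12 (θ : ℝ) (hθ0 : 0 < θ) (hθ : θ ≤ 1 / 2) :
    ∃ c : ℝ, 0 < c ∧ ∀ lam s : ℝ, 0 < lam → 0 < s →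
      s ^ ((1 : ℝ) / 2) *
        (∫ r in Set.Ioo (0 : ℝ) s,
          r ^ (θ - 1) * Real.exp (-(lam * (s - r))) * (s - r) ^ (-(1 : ℝ) / 2))
        ≤ c * lam ^ (-θ) := by
  refine ⟨4 / θ + 12, by positivity, fun lam s hl hs => ?_⟩
  have hs2 : (0:ℝ) < s / 2 := by positivity
  set φ : ℝ → ℝ := fun u => Real.exp (-(lam * u)) * u ^ (-(1:ℝ)/2) with hφ
  set A : ℝ := Real.exp (-(lam * (s/2))) * (s/2) ^ (-(1:ℝ)/2) with hA
  set B : ℝ := (s/2) ^ (θ - 1) with hB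
  have hA0 : 0 ≤ A := by rw [hA]; positivity
  have hB0 : 0 ≤ B := Real.rpow_nonneg hs2.le _
  have hint1 : IntegrableOn (fun r : ℝ => A * r ^ (θ-1)) (Set.Ioo (0:ℝ) s) :=
    (ioo_rpow_integrable hs.le (by linarith)).const_mul _
  have hφint : IntegrableOn φ (Set.Ioo (0:ℝ) s) := by
    rw [hφ]; exact phi_integrableOn hl.le hs
  have hreflint : IntegrableOn (fun r : ℝ => φ (s - r)) (Set.Ioo (0:ℝ) s) := by
    have h1 : IntervalIntegrable φ volume 0 s :=
      (intervalIntegrable_iff_integrableOn_Ioo_of_le hs.le).mpr hφint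
    have h2 := (h1.comp_sub_left s).symm
    rw [sub_zero, sub_self] at h2
    exact (intervalIntegrable_iff_integrableOn_Ioo_of_le hs.le).mp h2
  have hint2 : IntegrableOn (fun r : ℝ => B * φ (s - r)) (Set.Ioo (0:ℝ) s) :=
    hreflint.const_mul _
  have hgint : IntegrableOn (fun r : ℝ => A * r ^ (θ-1) + B * φ (s - r)) (Set.Ioo (0:ℝ) s) :=
    hint1.add hint2
  have hfg : ∀ r ∈ Set.Ioo (0:ℝ) s,
      r ^ (θ-1) * Real.exp (-(lam * (s - r))) * (s - r) ^ (-(1:ℝ)/2)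
        ≤ A * r ^ (θ-1) + B * φ (s - r) := by
    intro r hr
    have hr0 : (0:ℝ) < r := hr.1
    have hsr : (0:ℝ) < s - r := by have := hr.2; linarith
    have hφpos : 0 ≤ φ (s - r) := by
      rw [hφ]
      exact mul_nonneg (Real.exp_nonneg _) (Real.rpow_nonneg hsr.le _)
    have hr1 : 0 ≤ r ^ (θ-1) := Real.rpow_nonneg hr0.le _
    rcases le_or_gt r (s/2) with hc | hc
    · have hsr2 : s/2 ≤ s - r := by linarith
      have he : Real.exp (-(lam * (s - r))) ≤ Real.exp (-(lam * (s/2))) :=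
        Real.exp_le_exp.mpr (by nlinarith)
      have hp : (s - r) ^ (-(1:ℝ)/2) ≤ (s/2) ^ (-(1:ℝ)/2) :=
        Real.rpow_le_rpow_of_nonpos hs2 hsr2 (by norm_num)
      have hEA : Real.exp (-(lam * (s - r))) * (s - r) ^ (-(1:ℝ)/2) ≤ A := by
        rw [hA]
        exact mul_le_mul he hp (Real.rpow_nonneg hsr.le _) (Real.exp_nonneg _)
      calc r ^ (θ-1) * Real.exp (-(lam * (s - r))) * (s - r) ^ (-(1:ℝ)/2)
          = r ^ (θ-1) * (Real.exp (-(lam * (s - r))) * (s - r) ^ (-(1:ℝ)/2)) := by ring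
        _ ≤ r ^ (θ-1) * A := mul_le_mul_of_nonneg_left hEA hr1
        _ = A * r ^ (θ-1) := by ring
        _ ≤ A * r ^ (θ-1) + B * φ (s - r) := le_add_of_nonneg_right (mul_nonneg hB0 hφpos)
    · have hrB : r ^ (θ-1) ≤ B := Real.rpow_le_rpow_of_nonpos hs2 hc.le (by linarith)
      calc r ^ (θ-1) * Real.exp (-(lam * (s - r))) * (s - r) ^ (-(1:ℝ)/2)
          = r ^ (θ-1) * φ (s - r) := by simp only [hφ]; ring
        _ ≤ B * φ (s - r) := mul_le_mul_of_nonneg_right hrB hφpos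
        _ ≤ A * r ^ (θ-1) + B * φ (s - r) := le_add_of_nonneg_left (mul_nonneg hA0 hr1)
  have hImono : (∫ r in Set.Ioo (0:ℝ) s,
        r ^ (θ-1) * Real.exp (-(lam * (s - r))) * (s - r) ^ (-(1:ℝ)/2))
      ≤ ∫ r in Set.Ioo (0:ℝ) s, (A * r ^ (θ-1) + B * φ (s - r)) := by
    refine integral_mono_of_nonneg ?_ hgint ?_
    · filter_upwards [ae_restrict_mem measurableSet_Ioo] with r hr
      have hsr : (0:ℝ) < s - r := by have := hr.2; linarith
      exact mul_nonneg (mul_nonneg (Real.rpow_nonneg hr.1.le _) (Real.exp_nonneg _))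
        (Real.rpow_nonneg hsr.le _)
    · filter_upwards [ae_restrict_mem measurableSet_Ioo] with r hr
      exact hfg r hr
  have hval1 : (∫ r in Set.Ioo (0:ℝ) s, r ^ (θ-1)) = s ^ θ / θ := by
    rw [ioo_rpow_integral hs.le (Or.inl (by linarith)), show θ - 1 + 1 = θ by ring,
      Real.zero_rpow hθ0.ne', sub_zero]
  have hval2 : (∫ r in Set.Ioo (0:ℝ) s, φ (s - r)) = ∫ u in Set.Ioo (0:ℝ) s, φ u := by
    rw [← MeasureTheory.integral_Ioc_eq_integral_Ioo, ← intervalIntegral.integral_of_le hs.le,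
      intervalIntegral.integral_comp_sub_left φ s, sub_zero, sub_self,
      intervalIntegral.integral_of_le hs.le, MeasureTheory.integral_Ioc_eq_integral_Ioo]
  set K : ℝ := ∫ u in Set.Ioo (0:ℝ) s, φ u with hK
  have hsum : (∫ r in Set.Ioo (0:ℝ) s, (A * r ^ (θ-1) + B * φ (s - r)))
      = A * (s ^ θ / θ) + B * K := by
    rw [integral_add hint1 hint2, integral_const_mul, integral_const_mul, hval1, hval2]
  have hK0 : 0 ≤ K := by
    rw [hK]
    refine setIntegral_nonneg measurableSet_Ioo fun u hu => ?_
    rw [hφ]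
    exact mul_nonneg (Real.exp_nonneg _) (Real.rpow_nonneg hu.1.le _)
  have hKb1 : K ≤ 2 * s ^ ((1:ℝ)/2) := by
    rw [hK, hφ]; exact Kbound1 hl.le hs
  have hKb2 : K ≤ 6 * lam ^ (-(1:ℝ)/2) := by
    rw [hK, hφ]; exact Kbound2 hl hs
  have hs12 : (0:ℝ) ≤ s ^ ((1:ℝ)/2) := Real.rpow_nonneg hs.le _
  have hlamt : (0:ℝ) < lam ^ (-θ) := Real.rpow_pos_of_pos hl _
  -- term 1
  have eA : (s/2) ^ (-(1:ℝ)/2) = s ^ (-(1:ℝ)/2) * 2 ^ ((1:ℝ)/2) := by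
    rw [Real.div_rpow hs.le (by norm_num : (0:ℝ) ≤ 2), div_eq_mul_inv,
      ← Real.rpow_neg (by norm_num : (0:ℝ) ≤ 2), show -(-(1:ℝ)/2) = (1:ℝ)/2 by ring]
  have e2half : s ^ ((1:ℝ)/2) * s ^ (-(1:ℝ)/2) = 1 := by
    rw [← Real.rpow_add hs, show (1:ℝ)/2 + -(1:ℝ)/2 = 0 by ring, Real.rpow_zero]
  have hx0 : (0:ℝ) < lam * s := by positivity
  have hxθ : (lam * s) ^ θ ≤ 2 * Real.exp (lam * s / 2) := by
    have h1 : (lam * s) ^ θ ≤ 1 + lam * s := by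
      rcases le_or_gt (lam * s) 1 with h | h
      · have := Real.rpow_le_one hx0.le h hθ0.le
        linarith
      · have h2 : (lam * s) ^ θ ≤ (lam * s) ^ (1:ℝ) :=
          Real.rpow_le_rpow_of_exponent_le h.le (by linarith)
        rw [Real.rpow_one] at h2
        linarith
    have h2 := Real.add_one_le_exp (lam * s / 2)
    linarith
  have key1 : Real.exp (-(lam * (s/2))) * s ^ θ ≤ 2 * lam ^ (-θ) := by
    have hmul : (lam * s) ^ θ = lam ^ θ * s ^ θ := Real.mul_rpow hl.le hs.le
    have hlamt2 : (0:ℝ) < lam ^ θ := Real.rpow_pos_of_pos hl _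
    have hE : (0:ℝ) < Real.exp (lam * s / 2) := Real.exp_pos _
    rw [show -(lam * (s/2)) = -(lam * s / 2) by ring, Real.exp_neg, Real.rpow_neg hl.le]
    have hdiv : s ^ θ / Real.exp (lam * s / 2) ≤ 2 / lam ^ θ := by
      rw [div_le_div_iff₀ hE hlamt2]
      nlinarith [hxθ, hmul]
    calc (Real.exp (lam * s / 2))⁻¹ * s ^ θ
        = s ^ θ / Real.exp (lam * s / 2) := by ring
      _ ≤ 2 / lam ^ θ := hdiv
      _ = 2 * (lam ^ θ)⁻¹ := by ring
  have h2half : (2:ℝ) ^ ((1:ℝ)/2) ≤ 2 := by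
    have := Real.rpow_le_rpow_of_exponent_le (one_le_two) (by norm_num : (1:ℝ)/2 ≤ 1)
    rwa [Real.rpow_one] at this
  have hterm1 : s ^ ((1:ℝ)/2) * (A * (s ^ θ / θ)) ≤ (4/θ) * lam ^ (-θ) := by
    have expand : s ^ ((1:ℝ)/2) * (A * (s ^ θ / θ))
        = (s ^ ((1:ℝ)/2) * s ^ (-(1:ℝ)/2)) *
          ((2:ℝ) ^ ((1:ℝ)/2) * (Real.exp (-(lam * (s/2))) * s ^ θ) * θ⁻¹) := by
      rw [hA, eA]; ring
    rw [expand, e2half, one_mul]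
    have h1 : (2:ℝ) ^ ((1:ℝ)/2) * (Real.exp (-(lam * (s/2))) * s ^ θ) ≤ 2 * (2 * lam ^ (-θ)) :=
      mul_le_mul h2half key1
        (mul_nonneg (Real.exp_nonneg _) (Real.rpow_nonneg hs.le _)) (by norm_num)
    calc (2:ℝ) ^ ((1:ℝ)/2) * (Real.exp (-(lam * (s/2))) * s ^ θ) * θ⁻¹
        ≤ 2 * (2 * lam ^ (-θ)) * θ⁻¹ := mul_le_mul_of_nonneg_right h1 (inv_nonneg.mpr hθ0.le)
      _ = (4/θ) * lam ^ (-θ) := by ring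
  -- term 2
  have eB : (s/2) ^ (θ-1) = s ^ (θ-1) * 2 ^ ((1:ℝ)-θ) := by
    rw [Real.div_rpow hs.le (by norm_num : (0:ℝ) ≤ 2), div_eq_mul_inv,
      ← Real.rpow_neg (by norm_num : (0:ℝ) ≤ 2), show -(θ-1) = (1:ℝ)-θ by ring]
  have h2eB : (2:ℝ) ^ ((1:ℝ)-θ) ≤ 2 := by
    have := Real.rpow_le_rpow_of_exponent_le one_le_two (show (1:ℝ)-θ ≤ 1 by linarith)
    rwa [Real.rpow_one] at this
  have h2eB0 : (0:ℝ) ≤ (2:ℝ) ^ ((1:ℝ)-θ) := Real.rpow_nonneg (by norm_num) _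
  have hterm2 : s ^ ((1:ℝ)/2) * (B * K) ≤ 12 * lam ^ (-θ) := by
    rcases le_or_gt (lam * s) 1 with hcase | hcase
    · have hstl : s ^ θ ≤ lam ^ (-θ) := by
        have hsle : s ≤ lam⁻¹ := by
          rw [← one_div, le_div_iff₀ hl]
          nlinarith
        have := Real.rpow_le_rpow hs.le hsle hθ0.le
        rwa [Real.inv_rpow hl.le, ← Real.rpow_neg hl.le] at this
      have hexp : s ^ ((1:ℝ)/2) * s ^ (θ-1) * s ^ ((1:ℝ)/2) = s ^ θ := by
        rw [← Real.rpow_add hs, ← Real.rpow_add hs,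
          show (1:ℝ)/2 + (θ-1) + (1:ℝ)/2 = θ by ring]
      calc s ^ ((1:ℝ)/2) * (B * K)
          ≤ s ^ ((1:ℝ)/2) * (B * (2 * s ^ ((1:ℝ)/2))) :=
            mul_le_mul_of_nonneg_left (mul_le_mul_of_nonneg_left hKb1 hB0) hs12
        _ = ((2:ℝ) ^ ((1:ℝ)-θ) * 2) * (s ^ ((1:ℝ)/2) * s ^ (θ-1) * s ^ ((1:ℝ)/2)) := by
            rw [hB, eB]; ring
        _ = ((2:ℝ) ^ ((1:ℝ)-θ) * 2) * s ^ θ := by rw [hexp]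
        _ ≤ (2*2) * lam ^ (-θ) := by
            refine mul_le_mul (by linarith) hstl (Real.rpow_nonneg hs.le _) (by norm_num)
        _ ≤ 12 * lam ^ (-θ) := by nlinarith [hlamt]
    · have key3 : s ^ (θ - (1:ℝ)/2) * lam ^ (-(1:ℝ)/2) ≤ lam ^ (-θ) := by
        have ha : (0:ℝ) ≤ (1:ℝ)/2 - θ := by linarith
        have h1 : (1:ℝ) ≤ (lam*s) ^ ((1:ℝ)/2 - θ) := Real.one_le_rpow hcase.le ha
        rw [Real.mul_rpow hl.le hs.le] at h1
        have hsa : (0:ℝ) < s ^ ((1:ℝ)/2 - θ) := Real.rpow_pos_of_pos hs _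
        have h2 : (s ^ ((1:ℝ)/2 - θ))⁻¹ ≤ lam ^ ((1:ℝ)/2 - θ) := by
          rw [inv_eq_one_div, div_le_iff₀ hsa]
          nlinarith [h1]
        have h3 : s ^ (θ - (1:ℝ)/2) = (s ^ ((1:ℝ)/2 - θ))⁻¹ := by
          rw [show θ - (1:ℝ)/2 = -((1:ℝ)/2 - θ) by ring, Real.rpow_neg hs.le]
        have h4 : lam ^ ((1:ℝ)/2 - θ) * lam ^ (-(1:ℝ)/2) = lam ^ (-θ) := by
          rw [← Real.rpow_add hl, show (1:ℝ)/2 - θ + -(1:ℝ)/2 = -θ by ring]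
        rw [h3, ← h4]
        exact mul_le_mul_of_nonneg_right h2 (Real.rpow_nonneg hl.le _)
      have hexp2 : s ^ ((1:ℝ)/2) * s ^ (θ-1) = s ^ (θ - (1:ℝ)/2) := by
        rw [← Real.rpow_add hs, show (1:ℝ)/2 + (θ-1) = θ - (1:ℝ)/2 by ring]
      calc s ^ ((1:ℝ)/2) * (B * K)
          ≤ s ^ ((1:ℝ)/2) * (B * (6 * lam ^ (-(1:ℝ)/2))) :=
            mul_le_mul_of_nonneg_left (mul_le_mul_of_nonneg_left hKb2 hB0) hs12
        _ = ((2:ℝ) ^ ((1:ℝ)-θ) * 6) * (s ^ ((1:ℝ)/2) * s ^ (θ-1) * lam ^ (-(1:ℝ)/2)) := by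
            rw [hB, eB]; ring
        _ = ((2:ℝ) ^ ((1:ℝ)-θ) * 6) * (s ^ (θ - (1:ℝ)/2) * lam ^ (-(1:ℝ)/2)) := by
            rw [hexp2]
        _ ≤ ((2:ℝ)*6) * lam ^ (-θ) := by
            refine mul_le_mul (by linarith) key3
              (mul_nonneg (Real.rpow_nonneg hs.le _) (Real.rpow_nonneg hl.le _)) (by norm_num)
        _ = 12 * lam ^ (-θ) := by ring
  calc s ^ ((1:ℝ)/2) * (∫ r in Set.Ioo (0:ℝ) s,
        r ^ (θ-1) * Real.exp (-(lam * (s - r))) * (s - r) ^ (-(1:ℝ)/2))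
      ≤ s ^ ((1:ℝ)/2) * (A * (s ^ θ / θ) + B * K) := by
        refine mul_le_mul_of_nonneg_left ?_ hs12
        rw [← hsum]
        exact hImono
    _ = s ^ ((1:ℝ)/2) * (A * (s ^ θ / θ)) + s ^ ((1:ℝ)/2) * (B * K) := by ring
    _ ≤ (4/θ) * lam ^ (-θ) + 12 * lam ^ (-θ) := add_le_add hterm1 hterm2
    _ = (4/θ + 12) * lam ^ (-θ) := by ring
end

section
/- For every β ∈ [0, 1/2) there exists a constant c ∈ (0,∞), depending only on β, such that for all λ ∈ (0,∞) and all t ∈ (0,∞): t^{β} · ∫_0^t s^{−β} · e^{−λ(t−s)} · (t−s)^{−1/2−β} ds ≤ c · λ^{−(1/2−β)}. -/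
open MeasureTheory

private lemma aux_rpow_le_exp {a x : ℝ} (ha0 : 0 < a) (ha1 : a ≤ 1) (hx : 0 < x) :
    Real.exp (-x) * x ^ a ≤ 1 := by
  have h : x ^ a ≤ Real.exp x := by
    rcases le_total x 1 with h | h
    · exact (Real.rpow_le_one hx.le h ha0.le).trans (Real.one_le_exp hx.le)
    · calc x ^ a ≤ x ^ (1 : ℝ) := Real.rpow_le_rpow_of_exponent_le h ha1
        _ = x := Real.rpow_one x
        _ ≤ Real.exp x := by linarith [Real.add_one_le_exp x]
  rw [Real.exp_neg, inv_mul_le_iff₀ (Real.exp_pos x), mul_one]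
  exact h

theorem stmt14 (β : ℝ) (hβ0 : 0 ≤ β) (hβ : β < 1 / 2) :
    ∃ c : ℝ, 0 < c ∧ ∀ lam t : ℝ, 0 < lam → 0 < t →
      t ^ β *
        (∫ s in Set.Ioo (0 : ℝ) t,
          s ^ (-β) * Real.exp (-(lam * (t - s))) * (t - s) ^ (-(1 / 2 : ℝ) - β))
        ≤ c * lam ^ (-(1 / 2 - β)) := by
  set a : ℝ := 1 / 2 - β with ha_def
  have ha0 : 0 < a := by simp only [ha_def]; linarith
  have ha1 : a ≤ 1 := by simp only [ha_def]; linarith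
  have h1β : 0 < 1 - β := by linarith
  have hexp : -(1 / 2 : ℝ) - β = a - 1 := by simp only [ha_def]; ring
  have hΓ : 0 < Real.Gamma a := Real.Gamma_pos_of_pos ha0
  refine ⟨2 / (1 - β) + 2 ^ β * Real.Gamma a, by positivity, ?_⟩
  intro lam t hlam ht
  have ht2 : 0 < t / 2 := by linarith
  -- the pointwise bound g1 + g2
  set g1 : ℝ → ℝ := fun s => Real.exp (-(lam * (t / 2))) * (t / 2) ^ (-(1 / 2 : ℝ) - β) * s ^ (-β)
    with hg1_def
  set g2 : ℝ → ℝ := fun s =>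
      (t / 2) ^ (-β) * ((t - s) ^ (a - 1) * Real.exp (-(lam * (t - s)))) with hg2_def
  -- integrability of g1
  have hint_rpow : IntegrableOn (fun s : ℝ => s ^ (-β)) (Set.Ioo 0 t) := by
    have := intervalIntegral.intervalIntegrable_rpow' (a := 0) (b := t)
      (r := -β) (by linarith)
    exact (intervalIntegrable_iff_integrableOn_Ioo_of_le ht.le).mp this
  have hg1int : IntegrableOn g1 (Set.Ioo 0 t) := by
    simpa [hg1_def, mul_assoc, IntegrableOn] using
      (hint_rpow.const_mul (Real.exp (-(lam * (t / 2))) * (t / 2) ^ (-(1 / 2 : ℝ) - β)))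
  -- integrability of g2
  have hbase : IntervalIntegrable (fun u : ℝ => u ^ (a - 1) * Real.exp (-(lam * u)))
      MeasureTheory.volume 0 t := by
    apply (intervalIntegral.intervalIntegrable_rpow' (a := 0) (b := t)
      (r := a - 1) (by linarith)).mul_continuousOn
    exact (Real.continuous_exp.comp (by continuity)).continuousOn
  have hrefl : IntervalIntegrable (fun s : ℝ => (t - s) ^ (a - 1) * Real.exp (-(lam * (t - s))))
      MeasureTheory.volume 0 t := by
    have := hbase.comp_sub_left t
    simpa using this.symm
  have hreflOn : IntegrableOn (fun s : ℝ => (t - s) ^ (a - 1) * Real.exp (-(lam * (t - s))))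
      (Set.Ioo 0 t) :=
    (intervalIntegrable_iff_integrableOn_Ioo_of_le ht.le).mp hrefl
  have hg2int : IntegrableOn g2 (Set.Ioo 0 t) := by
    simpa [hg2_def, IntegrableOn] using hreflOn.const_mul ((t / 2) ^ (-β))
  -- pointwise inequality
  have hmono : (∫ s in Set.Ioo (0 : ℝ) t,
        s ^ (-β) * Real.exp (-(lam * (t - s))) * (t - s) ^ (-(1 / 2 : ℝ) - β))
      ≤ ∫ s in Set.Ioo (0 : ℝ) t, (g1 s + g2 s) := by
    apply integral_mono_of_nonneg
    · rw [Filter.EventuallyLE, ae_restrict_iff' measurableSet_Ioo]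
      filter_upwards with s hs
      have h1 : 0 < s := hs.1
      have h2 : 0 < t - s := by linarith [hs.2]
      positivity
    · exact hg1int.add hg2int
    · rw [Filter.EventuallyLE, ae_restrict_iff' measurableSet_Ioo]
      filter_upwards with s hs
      have h1 : 0 < s := hs.1
      have h2 : 0 < t - s := by linarith [hs.2]
      rcases le_total s (t / 2) with hcase | hcase
      · have hts : t / 2 ≤ t - s := by linarith
        have e1 : Real.exp (-(lam * (t - s))) ≤ Real.exp (-(lam * (t / 2))) := by
          apply Real.exp_le_exp.mpr
          nlinarith
        have e2 : (t - s) ^ (-(1 / 2 : ℝ) - β) ≤ (t / 2) ^ (-(1 / 2 : ℝ) - β) :=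
          Real.rpow_le_rpow_of_nonpos ht2 hts (by linarith)
        have hf1 : s ^ (-β) * Real.exp (-(lam * (t - s))) * (t - s) ^ (-(1 / 2 : ℝ) - β)
            ≤ g1 s := by
          simp only [hg1_def]
          have hs' : (0:ℝ) ≤ s ^ (-β) := (Real.rpow_pos_of_pos h1 _).le
          calc s ^ (-β) * Real.exp (-(lam * (t - s))) * (t - s) ^ (-(1 / 2 : ℝ) - β)
              ≤ s ^ (-β) * Real.exp (-(lam * (t / 2))) * (t / 2) ^ (-(1 / 2 : ℝ) - β) :=
                mul_le_mul (mul_le_mul_of_nonneg_left e1 hs') e2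
                  (Real.rpow_pos_of_pos h2 _).le (by positivity)
            _ = Real.exp (-(lam * (t / 2))) * (t / 2) ^ (-(1 / 2 : ℝ) - β) * s ^ (-β) := by ring
        have hg2nn : 0 ≤ g2 s := by
          simp only [hg2_def]
          positivity
        linarith
      · have hf2 : s ^ (-β) * Real.exp (-(lam * (t - s))) * (t - s) ^ (-(1 / 2 : ℝ) - β)
            ≤ g2 s := by
          simp only [hg2_def, hexp]
          have e1 : s ^ (-β) ≤ (t / 2) ^ (-β) :=
            Real.rpow_le_rpow_of_nonpos ht2 hcase (by linarith)
          calc s ^ (-β) * Real.exp (-(lam * (t - s))) * (t - s) ^ (a - 1)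
              ≤ (t / 2) ^ (-β) * Real.exp (-(lam * (t - s))) * (t - s) ^ (a - 1) := by
                apply mul_le_mul_of_nonneg_right _ (Real.rpow_pos_of_pos h2 _).le
                exact mul_le_mul_of_nonneg_right e1 (Real.exp_pos _).le
            _ = (t / 2) ^ (-β) * ((t - s) ^ (a - 1) * Real.exp (-(lam * (t - s)))) := by ring
        have hg1nn : 0 ≤ g1 s := by
          simp only [hg1_def]
          positivity
        linarith
  -- value of ∫ g1
  have hI1 : (∫ s in Set.Ioo (0 : ℝ) t, g1 s)
      = Real.exp (-(lam * (t / 2))) * (t / 2) ^ (-(1 / 2 : ℝ) - β) * (t ^ (1 - β) / (1 - β)) := by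
    simp only [hg1_def]
    rw [integral_const_mul]
    congr 1
    rw [← integral_Ioc_eq_integral_Ioo, ← intervalIntegral.integral_of_le ht.le]
    rw [integral_rpow (Or.inl (by linarith))]
    rw [Real.zero_rpow (by linarith : -β + 1 ≠ 0)]
    rw [show -β + 1 = 1 - β by ring]
    ring
  -- bound for ∫ g2
  have hI2 : (∫ s in Set.Ioo (0 : ℝ) t, g2 s)
      ≤ (t / 2) ^ (-β) * ((1 / lam) ^ a * Real.Gamma a) := by
    simp only [hg2_def]
    rw [integral_const_mul]
    apply mul_le_mul_of_nonneg_left _ (Real.rpow_pos_of_pos ht2 _).le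
    have hIoi : IntegrableOn (fun u : ℝ => u ^ (a - 1) * Real.exp (-(lam * u)))
        (Set.Ioi 0) := by
      have := integrableOn_rpow_mul_exp_neg_mul_rpow (s := a - 1) (p := 1) (b := lam)
        (by linarith) one_pos hlam
      simpa [Real.rpow_one, neg_mul] using this
    calc (∫ s in Set.Ioo (0 : ℝ) t, (t - s) ^ (a - 1) * Real.exp (-(lam * (t - s))))
        = ∫ u in Set.Ioc (0 : ℝ) t, u ^ (a - 1) * Real.exp (-(lam * u)) := by
          rw [← integral_Ioc_eq_integral_Ioo, ← intervalIntegral.integral_of_le ht.le]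
          have := intervalIntegral.integral_comp_sub_left
            (a := 0) (b := t) (fun u : ℝ => u ^ (a - 1) * Real.exp (-(lam * u))) t
          simp only [sub_zero, sub_self] at this
          rw [this, intervalIntegral.integral_of_le ht.le]
      _ ≤ ∫ u in Set.Ioi (0 : ℝ), u ^ (a - 1) * Real.exp (-(lam * u)) := by
          apply setIntegral_mono_set hIoi
          · rw [Filter.EventuallyLE, ae_restrict_iff' measurableSet_Ioi]
            filter_upwards with u hu
            have : (0:ℝ) < u := hu
            positivity
          · exact Filter.Eventually.of_forall (fun u hu => hu.1)
      _ = (1 / lam) ^ a * Real.Gamma a := Real.integral_rpow_mul_exp_neg_mul_Ioi ha0 hlam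
  -- combine
  have hsum : (∫ s in Set.Ioo (0 : ℝ) t, (g1 s + g2 s))
      = (∫ s in Set.Ioo (0 : ℝ) t, g1 s) + ∫ s in Set.Ioo (0 : ℝ) t, g2 s :=
    integral_add hg1int hg2int
  -- final arithmetic
  have hterm1 : t ^ β * (Real.exp (-(lam * (t / 2))) * (t / 2) ^ (-(1 / 2 : ℝ) - β)
      * (t ^ (1 - β) / (1 - β))) ≤ 2 / (1 - β) * lam ^ (-a) := by
    have htv : (t / 2) ^ (-(1 / 2 : ℝ) - β) = t ^ (-(1 / 2 : ℝ) - β) * 2 ^ ((1 / 2 : ℝ) + β) := by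
      rw [Real.div_rpow ht.le (by norm_num : (0:ℝ) ≤ 2), div_eq_mul_inv,
        ← Real.rpow_neg (by norm_num : (0:ℝ) ≤ 2)]
      congr 1
      ring
    have hta : t ^ β * t ^ (-(1 / 2 : ℝ) - β) * t ^ (1 - β) = t ^ a := by
      rw [← Real.rpow_add ht, ← Real.rpow_add ht]
      congr 1
      simp only [ha_def]; ring
    have hkey : Real.exp (-(lam * (t / 2))) * t ^ a ≤ 2 ^ a * lam ^ (-a) := by
      have hx : 0 < lam * (t / 2) := by positivity
      have htx : t = (lam * (t / 2)) * (2 / lam) := by field_simp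
      have h2l : (0:ℝ) ≤ 2 / lam := by positivity
      calc Real.exp (-(lam * (t / 2))) * t ^ a
          = Real.exp (-(lam * (t / 2))) * (lam * (t / 2)) ^ a * (2 / lam) ^ a := by
            rw [mul_assoc, ← Real.mul_rpow hx.le h2l, ← htx]
        _ ≤ 1 * (2 / lam) ^ a := by
            apply mul_le_mul_of_nonneg_right (aux_rpow_le_exp ha0 ha1 hx)
            positivity
        _ = 2 ^ a * lam ^ (-a) := by
            rw [one_mul, div_eq_mul_inv, Real.mul_rpow (by norm_num) (by positivity),
              ← Real.rpow_neg_one, ← Real.rpow_mul hlam.le]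
            norm_num [Real.rpow_neg hlam.le]
    have h2pow : (2:ℝ) ^ ((1 / 2 : ℝ) + β) * 2 ^ a = 2 := by
      rw [← Real.rpow_add (by norm_num)]
      have : (1 / 2 : ℝ) + β + a = 1 := by simp only [ha_def]; ring
      rw [this, Real.rpow_one]
    calc t ^ β * (Real.exp (-(lam * (t / 2))) * (t / 2) ^ (-(1 / 2 : ℝ) - β)
          * (t ^ (1 - β) / (1 - β)))
        = (2 ^ ((1 / 2 : ℝ) + β) / (1 - β)) * (Real.exp (-(lam * (t / 2))) * t ^ a) := by
          rw [htv, ← hta]; ring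
      _ ≤ (2 ^ ((1 / 2 : ℝ) + β) / (1 - β)) * (2 ^ a * lam ^ (-a)) := by
          apply mul_le_mul_of_nonneg_left hkey
          positivity
      _ = 2 / (1 - β) * lam ^ (-a) := by
          rw [div_mul_eq_mul_div, ← mul_assoc, h2pow, mul_div_right_comm]
  have hterm2 : t ^ β * ((t / 2) ^ (-β) * ((1 / lam) ^ a * Real.Gamma a))
      = 2 ^ β * Real.Gamma a * lam ^ (-a) := by
    have h1 : (t / 2 : ℝ) ^ (-β) = t ^ (-β) * 2 ^ β := by
      rw [Real.div_rpow ht.le (by norm_num : (0:ℝ) ≤ 2), div_eq_mul_inv,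
        ← Real.rpow_neg (by norm_num : (0:ℝ) ≤ 2)]
      congr 1
      ring
    have h2 : t ^ β * t ^ (-β) = 1 := by
      rw [← Real.rpow_add ht]; simp
    have h3 : (1 / lam : ℝ) ^ a = lam ^ (-a) := by
      rw [one_div, ← Real.rpow_neg_one, ← Real.rpow_mul hlam.le]
      norm_num
    calc t ^ β * ((t / 2) ^ (-β) * ((1 / lam) ^ a * Real.Gamma a))
        = (t ^ β * t ^ (-β)) * (2 ^ β * (lam ^ (-a) * Real.Gamma a)) := by rw [h1, h3]; ring
      _ = 2 ^ β * Real.Gamma a * lam ^ (-a) := by rw [h2]; ring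
  have htβ : (0:ℝ) ≤ t ^ β := (Real.rpow_pos_of_pos ht β).le
  calc t ^ β * (∫ s in Set.Ioo (0 : ℝ) t,
        s ^ (-β) * Real.exp (-(lam * (t - s))) * (t - s) ^ (-(1 / 2 : ℝ) - β))
      ≤ t ^ β * ((∫ s in Set.Ioo (0 : ℝ) t, g1 s) + ∫ s in Set.Ioo (0 : ℝ) t, g2 s) := by
        apply mul_le_mul_of_nonneg_left _ htβ
        rw [← hsum]; exact hmono
    _ = t ^ β * (∫ s in Set.Ioo (0 : ℝ) t, g1 s) + t ^ β * ∫ s in Set.Ioo (0 : ℝ) t, g2 s := by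
        ring
    _ ≤ 2 / (1 - β) * lam ^ (-a) + 2 ^ β * Real.Gamma a * lam ^ (-a) := by
        apply add_le_add
        · rw [hI1]; exact hterm1
        · rw [← hterm2]; exact mul_le_mul_of_nonneg_left hI2 htβ
    _ = (2 / (1 - β) + 2 ^ β * Real.Gamma a) * lam ^ (-a) := by ring
end
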